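/- Uniform decay of the greedy index-selection criterion (Lemma 'index selection upper bound'): In the index-selection procedure with initial counts m_k(0) = 0 for all k, for every s ≥ 5 it holds that max_{k ∈ {1,…,5}} f_k( m_k(s) ) ≤ D / √(s − 5), where D = √5 · ( max_{j ∈ {1,…,5}} D_j ) · ( max_{k ∈ {1,…,5}} D_k/d_k ) and the right-hand side is +∞ when s = 5. -/

import Mathlib

open Set
open scoped Classical ENNReal

/-- The criterion functions `f_k` of the index-selection procedure: for `k ∈ {1,2,3}`,
`f_k(n) = d_k/√n`, and for `k ∈ {4,5}`,
`f_k(n) = d_4/√(2^{⌊log₂(n+1)⌋} − 1) + d_5/2^{⌊log₂(n+1)⌋}`,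
with the convention `a/0 = +∞` for `a > 0` (values in `ℝ≥0∞`). -/
noncomputable def fIdx (d : Fin 5 → ℝ) (k : Fin 5) (n : ℕ) : ℝ≥0∞ :=
  if k.val < 3 then
    ENNReal.ofReal (d k) / ENNReal.ofReal (Real.sqrt n)
  else
    ENNReal.ofReal (d 3) / ENNReal.ofReal (Real.sqrt ((2 ^ Nat.log 2 (n + 1) - 1 : ℕ) : ℝ))
      + ENNReal.ofReal (d 4) / ENNReal.ofReal ((2 ^ Nat.log 2 (n + 1) : ℕ) : ℝ)

/-- The constants `D_1 = d_1, D_2 = d_2, D_3 = d_3, D_4 = D_5 = 2(d_4 + d_5)`. -/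
noncomputable def DIdx (d : Fin 5 → ℝ) : Fin 5 → ℝ :=
  ![d 0, d 1, d 2, 2 * (d 3 + d 4), 2 * (d 3 + d 4)]

/-- One step of the greedy index-selection: select the least index maximizing
`f_k(m_k)`. -/
noncomputable def stepIdx (d : Fin 5 → ℝ) (m : Fin 5 → ℕ) : Fin 5 :=
  ((Finset.univ.filter fun k : Fin 5 => ∀ j, fIdx d j (m j) ≤ fIdx d k (m k)).min).untopD 0

/-- The counts `m_k(s)` of the greedy index-selection procedure started from `m0`. -/
noncomputable def mSeq (d : Fin 5 → ℝ) (m0 : Fin 5 → ℕ) : ℕ → Fin 5 → ℕ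
  | 0 => m0
  | s + 1 =>
    Function.update (mSeq d m0 s) (stepIdx d (mSeq d m0 s))
      (mSeq d m0 s (stepIdx d (mSeq d m0 s)) + 1)

/-!
Each `f_k` is antitone and bounded by `D_k/√n`. When index `k` was selected for the last time,
`f_k(m_k − 1)` was the largest criterion value, and criterion values only decrease afterwards;
hence `max_j f_j(m_j(s)) ≤ f_k(m_k(s) − 1) ≤ D_k/√(m_k(s) − 1)` for every index `k` that has
been selected at least once. Since the counts sum to `s`, some `k` has `m_k(s) ≥ s/5`.
-/

namespace ENNReal

theorem ofReal_div_sqrt_le_ofReal_mul_div_sqrt {a c x y : ℝ} (ha : 0 ≤ a) (hc : 0 < c)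
    (hxy : x ≤ c ^ 2 * y) :
    ENNReal.ofReal a / ENNReal.ofReal √y ≤ ENNReal.ofReal (c * a) / ENNReal.ofReal √x := by
  rcases ha.eq_or_lt with rfl | ha
  · simp
  rcases le_or_gt x 0 with hx | hx
  · rw [Real.sqrt_eq_zero'.mpr hx, ENNReal.ofReal_zero,
      ENNReal.div_zero (ENNReal.ofReal_pos.mpr (by positivity)).ne']
    exact le_top
  have hy : 0 < y := pos_of_mul_pos_right (hx.trans_le hxy) (sq_nonneg c)
  have hsqrt : √x ≤ c * √y := by
    simpa [Real.sqrt_mul', Real.sqrt_sq hc.le, hy.le] using Real.sqrt_le_sqrt hxy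
  rw [← ENNReal.ofReal_div_of_pos (Real.sqrt_pos.mpr hy),
    ← ENNReal.ofReal_div_of_pos (Real.sqrt_pos.mpr hx)]
  refine ENNReal.ofReal_le_ofReal ?_
  rw [div_le_div_iff₀ (Real.sqrt_pos.mpr hy) (Real.sqrt_pos.mpr hx)]
  nlinarith

end ENNReal

theorem Nat.le_two_mul_two_pow_log_succ_sub_one (n : ℕ) :
    n ≤ 2 * (2 ^ Nat.log 2 (n + 1) - 1) := by
  have := Nat.lt_pow_succ_log_self (b := 2) (by norm_num) (n + 1)
  rw [pow_succ] at this
  omega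

theorem DIdx_pos {d : Fin 5 → ℝ} (hd : ∀ k, 0 < d k) (k : Fin 5) : 0 < DIdx d k := by
  fin_cases k <;> simp [DIdx, hd, add_pos]

theorem DIdx_le_sup'_mul_sup'_div {d : Fin 5 → ℝ} (hd : ∀ k, 0 < d k) (b : Fin 5) :
    DIdx d b ≤ Finset.univ.sup' Finset.univ_nonempty (DIdx d)
      * Finset.univ.sup' Finset.univ_nonempty fun j => DIdx d j / d j := by
  have hD := Finset.le_sup' (DIdx d) (Finset.mem_univ b)
  have hR := Finset.le_sup' (fun j => DIdx d j / d j) (Finset.mem_univ 0)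
  rw [show DIdx d 0 / d 0 = 1 from div_self (hd 0).ne'] at hR
  have hD0 := (DIdx_pos hd b).le.trans hD
  calc DIdx d b ≤ Finset.univ.sup' Finset.univ_nonempty (DIdx d) * 1 := by rwa [mul_one]
    _ ≤ _ := mul_le_mul_of_nonneg_left hR hD0

theorem fIdx_antitone (d : Fin 5 → ℝ) (k : Fin 5) : Antitone (fIdx d k) := by
  intro a b hab
  have hpow : 2 ^ Nat.log 2 (a + 1) ≤ 2 ^ Nat.log 2 (b + 1) :=
    Nat.pow_le_pow_right two_pos (Nat.log_mono_right (by omega))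
  unfold fIdx
  split
  · gcongr
  · gcongr

theorem ofReal_div_sqrt_two_pow_log_add_le {a b : ℝ} (ha : 0 ≤ a) (hb : 0 ≤ b) (n : ℕ) :
    ENNReal.ofReal a / ENNReal.ofReal √((2 ^ Nat.log 2 (n + 1) - 1 : ℕ) : ℝ)
        + ENNReal.ofReal b / ENNReal.ofReal ((2 ^ Nat.log 2 (n + 1) : ℕ) : ℝ)
      ≤ ENNReal.ofReal (2 * (a + b)) / ENNReal.ofReal √n := by
  set P := 2 ^ Nat.log 2 (n + 1)
  have hn := Nat.le_two_mul_two_pow_log_succ_sub_one n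
  have hsqrtP : ENNReal.ofReal (P : ℝ) = ENNReal.ofReal √((P : ℝ) ^ 2) := by
    rw [Real.sqrt_sq (Nat.cast_nonneg P)]
  have hPsq : P ≤ P ^ 2 := Nat.le_self_pow two_ne_zero P
  have hnP : (n : ℝ) ≤ 2 ^ 2 * (P : ℝ) ^ 2 := by
    exact_mod_cast (by omega : n ≤ 2 ^ 2 * P ^ 2)
  have hnP' : (n : ℝ) ≤ 2 ^ 2 * ((P - 1 : ℕ) : ℝ) := by
    exact_mod_cast (by omega : n ≤ 2 ^ 2 * (P - 1))
  rw [hsqrtP, mul_add, ENNReal.ofReal_add (by positivity) (by positivity),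
    ← ENNReal.div_add_div_same]
  exact add_le_add (ENNReal.ofReal_div_sqrt_le_ofReal_mul_div_sqrt ha two_pos hnP')
    (ENNReal.ofReal_div_sqrt_le_ofReal_mul_div_sqrt hb two_pos hnP)

theorem fIdx_le_DIdx_div_sqrt {d : Fin 5 → ℝ} (hd : ∀ k, 0 ≤ d k) (k : Fin 5) (n : ℕ) :
    fIdx d k n ≤ ENNReal.ofReal (DIdx d k) / ENNReal.ofReal √n := by
  have hlast := ofReal_div_sqrt_two_pow_log_add_le (hd 3) (hd 4) n
  fin_cases k
  · simp [fIdx, DIdx]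
  · simp [fIdx, DIdx]
  · simp [fIdx, DIdx]
  · simpa [fIdx, DIdx] using hlast
  · simpa [fIdx, DIdx] using hlast

theorem fIdx_le_fIdx_stepIdx (d : Fin 5 → ℝ) (m : Fin 5 → ℕ) (j : Fin 5) :
    fIdx d j (m j) ≤ fIdx d (stepIdx d m) (m (stepIdx d m)) := by
  set F := Finset.univ.filter fun k : Fin 5 => ∀ j, fIdx d j (m j) ≤ fIdx d k (m k)
  obtain ⟨b, -, hb⟩ := Finset.exists_max_image Finset.univ (fun k => fIdx d k (m k))
    Finset.univ_nonempty
  obtain ⟨a, ha⟩ := Finset.min_of_nonempty (s := F) ⟨b, by simpa [F] using hb⟩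
  have hstep : stepIdx d m = a := by
    show F.min.untopD 0 = a
    rw [ha, WithTop.untopD_coe]
  rw [hstep]
  exact (Finset.mem_filter.mp (Finset.mem_of_min ha)).2 j

section mSeq

variable (d : Fin 5 → ℝ) (m0 : Fin 5 → ℕ)

theorem mSeq_succ (s : ℕ) :
    mSeq d m0 (s + 1) = Function.update (mSeq d m0 s) (stepIdx d (mSeq d m0 s))
      (mSeq d m0 s (stepIdx d (mSeq d m0 s)) + 1) := rfl

theorem sum_mSeq (s : ℕ) : ∑ k, mSeq d m0 s k = ∑ k, m0 k + s := by
  induction s with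
  | zero => rfl
  | succ s ih =>
    rw [mSeq_succ, Finset.sum_update_of_mem (Finset.mem_univ _), ← add_assoc, ← ih,
      Finset.sum_eq_add_sum_sdiff_singleton_of_mem (Finset.mem_univ (stepIdx d (mSeq d m0 s)))]
    ring

theorem fIdx_mSeq_succ_le (s : ℕ) (j : Fin 5) :
    fIdx d j (mSeq d m0 (s + 1) j) ≤ fIdx d j (mSeq d m0 s j) := by
  rw [mSeq_succ]
  rcases eq_or_ne j (stepIdx d (mSeq d m0 s)) with rfl | hj
  · rw [Function.update_self]
    exact fIdx_antitone d _ (Nat.le_succ _)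
  · rw [Function.update_of_ne hj]

theorem fIdx_mSeq_le_of_lt (s : ℕ) (j k : Fin 5) (hk : m0 k < mSeq d m0 s k) :
    fIdx d j (mSeq d m0 s j) ≤ fIdx d k (mSeq d m0 s k - 1) := by
  induction s with
  | zero => exact absurd hk (lt_irrefl _)
  | succ s ih =>
    refine (fIdx_mSeq_succ_le d m0 s j).trans ?_
    rw [mSeq_succ] at hk ⊢
    rcases eq_or_ne k (stepIdx d (mSeq d m0 s)) with rfl | hki
    · rw [Function.update_self, Nat.add_sub_cancel]
      exact fIdx_le_fIdx_stepIdx d _ j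
    · rw [Function.update_of_ne hki] at hk ⊢
      exact ih hk

end mSeq

theorem Fintype.exists_sum_le_card_mul {ι : Type*} [Fintype ι] [Nonempty ι] (f : ι → ℕ) :
    ∃ i, ∑ j, f j ≤ Fintype.card ι * f i := by
  obtain ⟨i, -, hi⟩ := Finset.exists_le_of_sum_le (s := Finset.univ) Finset.univ_nonempty
    (f := fun _ => ∑ j, f j) (g := fun i => Fintype.card ι * f i)
    (by simp [Finset.mul_sum, Finset.card_univ])
  exact ⟨i, hi⟩

/-- Uniform decay of the greedy index-selection criterion: starting from zero counts,
for every `s ≥ 5` we have `max_k f_k(m_k(s)) ≤ D/√(s−5)` (interpreted as `+∞` when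
`s = 5`), where `D = √5·(max_j D_j)·(max_k D_k/d_k)`. -/
theorem greedy_index_selection_upper_bound
    (d : Fin 5 → ℝ) (hd : ∀ k, 0 < d k) :
    ∀ s : ℕ, 5 ≤ s → ∀ k : Fin 5,
      fIdx d k (mSeq d (fun _ => 0) s k)
        ≤ ENNReal.ofReal
              (Real.sqrt 5 * (Finset.univ.sup' Finset.univ_nonempty (DIdx d))
                * (Finset.univ.sup' Finset.univ_nonempty fun j => DIdx d j / d j))
            / ENNReal.ofReal (Real.sqrt ((s : ℝ) - 5)) := by
  intro s hs k
  set m := mSeq d (fun _ => 0) s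
  obtain ⟨b, hb⟩ := Fintype.exists_sum_le_card_mul m
  rw [sum_mSeq, Finset.sum_const_zero, zero_add, Fintype.card_fin] at hb
  have hmb : 0 < m b := by omega
  have hsb : (s : ℝ) - 5 ≤ √5 ^ 2 * ((m b - 1 : ℕ) : ℝ) := by
    rw [Real.sq_sqrt (by norm_num), Nat.cast_sub hmb]
    have : (s : ℝ) ≤ 5 * m b := by exact_mod_cast hb
    push_cast
    linarith
  calc fIdx d k (m k) ≤ fIdx d b (m b - 1) := fIdx_mSeq_le_of_lt d _ s k b hmb
    _ ≤ ENNReal.ofReal (DIdx d b) / ENNReal.ofReal √((m b - 1 : ℕ) : ℝ) :=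
      fIdx_le_DIdx_div_sqrt (fun k => (hd k).le) b _
    _ ≤ ENNReal.ofReal (√5 * DIdx d b) / ENNReal.ofReal √((s : ℝ) - 5) :=
      ENNReal.ofReal_div_sqrt_le_ofReal_mul_div_sqrt (DIdx_pos hd b).le (by positivity) hsb
    _ ≤ _ := by
      rw [mul_assoc]
      gcongr
      exact DIdx_le_sup'_mul_sup'_div hd b
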